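/- Consider the three-player game where each player i ∈ {1, 2, 3} chooses x_i ∈ {0, 1} and receives utility U_1(x_1, x_2, x_3) = log(x_1 + x_2 + x_3 + b) − c_1·x_1 − γ_{12}·x_1·x_2 − γ_{13}·x_1·x_3, U_2(x_1, x_2, x_3) = log(x_1 + x_2 + x_3 + b) − c_2·x_2 − γ_{21}·x_2·x_1 − γ_{23}·x_2·x_3, U_3(x_1, x_2, x_3) = log(x_1 + x_2 + x_3 + b) − c_3·x_3 − γ_{31}·x_3·x_1 − γ_{32}·x_3·x_2, with constants b = 1.0099, c_1 = 0.161, c_2 = 0.1545, c_3 = 0.1102, γ_{12} = 1.0622, γ_{13} = 0.0979, γ_{21} = 0.0521, γ_{23} = 0.5048, γ_{31} = 0.9145, γ_{32} = 0.2694, and log the natural logarithm. Then this game has no pure Nash equilibrium: for every profile (x_1, x_2, x_3) ∈ {0,1}³ there exists a player i and a deviation x_i' ∈ {0,1} with U_i at the deviated profile strictly greater than U_i at (x_1, x_2, x_3). -/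
import Mathlib


namespace NoPureNashCounterexample

/-- Numerical value of a binary action. -/
noncomputable def val (x : Bool) : ℝ := if x then 1 else 0

/-- Utility of player 1. -/
noncomputable def U1 (x1 x2 x3 : Bool) : ℝ :=
  Real.log (val x1 + val x2 + val x3 + 1.0099)
    - 0.161 * val x1 - 1.0622 * val x1 * val x2 - 0.0979 * val x1 * val x3

/-- Utility of player 2. -/
noncomputable def U2 (x1 x2 x3 : Bool) : ℝ :=
  Real.log (val x1 + val x2 + val x3 + 1.0099)
    - 0.1545 * val x2 - 0.0521 * val x2 * val x1 - 0.5048 * val x2 * val x3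

/-- Utility of player 3. -/
noncomputable def U3 (x1 x2 x3 : Bool) : ℝ :=
  Real.log (val x1 + val x2 + val x3 + 1.0099)
    - 0.1102 * val x3 - 0.9145 * val x3 * val x1 - 0.2694 * val x3 * val x2

/-- Lower log-gap bound: if `(4/(4-c))^4 * b < a` then `log b + c < log a`. -/
lemma log_gap_lb (a b c : ℝ) (hb : 0 < b) (hc0 : 0 ≤ c) (hc4 : c < 4)
    (h : (4 / (4 - c)) ^ 4 * b < a) : Real.log b + c < Real.log a := by
  have h4c : 0 < 4 - c := by linarith
  have hr : (1 : ℝ) ≤ 4 / (4 - c) := by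
    rw [le_div_iff₀ h4c]; linarith
  have hquarter : Real.exp (c / 4) ≤ 4 / (4 - c) := by
    have h1 : 1 - c / 4 ≤ Real.exp (-(c / 4)) := by
      have := Real.add_one_le_exp (-(c / 4)); linarith
    have h2 : Real.exp (-(c / 4)) = 1 / Real.exp (c / 4) := by
      rw [Real.exp_neg]; ring
    have hpos := Real.exp_pos (c / 4)
    rw [h2] at h1
    rw [le_div_iff₀ h4c]
    rw [le_div_iff₀ hpos] at h1
    nlinarith
  have hexp : Real.exp c ≤ (4 / (4 - c)) ^ 4 := by
    have : Real.exp c = (Real.exp (c / 4)) ^ 4 := by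
      rw [← Real.exp_nat_mul]; ring_nf
    rw [this]
    exact pow_le_pow_left₀ (le_of_lt (Real.exp_pos _)) hquarter 4
  have ha : 0 < a := lt_trans (by positivity) h
  have key : Real.exp c * b < a := by
    have : (4 / (4 - c)) ^ 4 * b ≤ (4 / (4 - c)) ^ 4 * b := le_refl _
    nlinarith [Real.exp_pos c]
  have : Real.exp (Real.log b + c) < a := by
    rw [Real.exp_add, Real.exp_log hb]
    nlinarith
  calc Real.log b + c = Real.log (Real.exp (Real.log b + c)) := by
        rw [Real.log_exp]
    _ < Real.log a := Real.log_lt_log (Real.exp_pos _) this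

/-- Upper log-gap bound: if `a < (1 + c) * b` then `log a < log b + c`. -/
lemma log_gap_ub (a b c : ℝ) (ha : 0 < a) (hb : 0 < b) (hc : 0 < c)
    (h : a < (1 + c) * b) : Real.log a < Real.log b + c := by
  have h1c : (0:ℝ) < 1 + c := by linarith
  have h1 : Real.log a < Real.log ((1 + c) * b) := Real.log_lt_log ha h
  have h2 : Real.log ((1 + c) * b) = Real.log (1 + c) + Real.log b := by
    rw [Real.log_mul (ne_of_gt h1c) (ne_of_gt hb)]
  have h3 : Real.log (1 + c) ≤ c := by
    have := Real.log_le_sub_one_of_pos h1c; linarith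
  linarith

/-- Counterexample: no pure Nash equilibrium.
In the explicit three-player binary game above, every strategy profile admits a
strictly profitable unilateral deviation by some player; hence no pure Nash
equilibrium exists. -/
theorem no_pure_nash_equilibrium :
    ∀ x1 x2 x3 : Bool,
      (∃ x1' : Bool, U1 x1 x2 x3 < U1 x1' x2 x3) ∨
      (∃ x2' : Bool, U2 x1 x2 x3 < U2 x1 x2' x3) ∨
      (∃ x3' : Bool, U3 x1 x2 x3 < U3 x1 x2 x3') := by
  intro x1 x2 x3
  cases x1 <;> cases x2 <;> cases x3
  -- (0,0,0): player 1 deviates to 1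
  · left; exact ⟨true, by
      simp only [U1, val, if_true, if_false]
      have := log_gap_lb (0+0+0+1.0099+1) (0+0+0+1.0099) 0.161
        (by norm_num) (by norm_num) (by norm_num) (by norm_num)
      norm_num at this ⊢; linarith⟩
  -- (0,0,1): player 1 deviates to 1
  · left; exact ⟨true, by
      simp only [U1, val, if_true, if_false]
      have := log_gap_lb (0+0+1+1.0099+1) (0+0+1+1.0099) 0.2589
        (by norm_num) (by norm_num) (by norm_num) (by norm_num)
      norm_num at this ⊢; linarith⟩
  -- (0,1,0): player 3 deviates to 1
  · right; right; exact ⟨true, by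
      simp only [U3, val, if_true, if_false]
      have := log_gap_lb (0+1+0+1.0099+1) (0+1+0+1.0099) 0.3796
        (by norm_num) (by norm_num) (by norm_num) (by norm_num)
      norm_num at this ⊢; linarith⟩
  -- (0,1,1): player 2 deviates to 0
  · right; left; exact ⟨false, by
      simp only [U2, val, if_true, if_false]
      have := log_gap_ub (0+1+1+1.0099) (0+0+1+1.0099) 0.6593
        (by norm_num) (by norm_num) (by norm_num) (by norm_num)
      norm_num at this ⊢; linarith⟩
  -- (1,0,0): player 2 deviates to 1
  · right; left; exact ⟨true, by
      simp only [U2, val, if_true, if_false]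
      have := log_gap_lb (1+0+0+1.0099+1) (1+0+0+1.0099) 0.2066
        (by norm_num) (by norm_num) (by norm_num) (by norm_num)
      norm_num at this ⊢; linarith⟩
  -- (1,0,1): player 3 deviates to 0
  · right; right; exact ⟨false, by
      simp only [U3, val, if_true, if_false]
      have := log_gap_ub (1+0+1+1.0099) (1+0+0+1.0099) 1.0247
        (by norm_num) (by norm_num) (by norm_num) (by norm_num)
      norm_num at this ⊢; linarith⟩
  -- (1,1,0): player 1 deviates to 0
  · left; exact ⟨false, by
      simp only [U1, val, if_true, if_false]
      have := log_gap_ub (1+1+0+1.0099) (0+1+0+1.0099) 1.2232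
        (by norm_num) (by norm_num) (by norm_num) (by norm_num)
      norm_num at this ⊢; linarith⟩
  -- (1,1,1): player 2 deviates to 0
  · right; left; exact ⟨false, by
      simp only [U2, val, if_true, if_false]
      have := log_gap_ub (1+1+1+1.0099) (1+0+1+1.0099) 0.7114
        (by norm_num) (by norm_num) (by norm_num) (by norm_num)
      norm_num at this ⊢; linarith⟩

end NoPureNashCounterexample
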